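/- arXiv:2603.10837 — 8 statements merged into one kernel-verified Lean document; each statement's English description precedes it below -/
import Mathlib

section
/- A combinatorial code C on n neurons is intersection-complete if and only if every element of the canonical form CF(I_C) is at most linear in the (1−x_i) factors; that is, if x^σ(1−x)^τ ∈ CF(I_C), then |τ| ≤ 1. -/
open MvPolynomial

/-- The pseudomonomial `x^σ (1-x)^τ` in `F₂[x₁,…,xₙ]`. -/
noncomputable def pseudoMonomial {n : ℕ} (σ τ : Finset (Fin n)) :
    MvPolynomial (Fin n) (ZMod 2) :=
  (∏ i ∈ σ, X i) * (∏ j ∈ τ, (1 - X j))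

/-- The indicator vector of a codeword. -/
def evalPt {n : ℕ} (c : Finset (Fin n)) : Fin n → ZMod 2 :=
  fun i => if i ∈ c then 1 else 0

/-- Membership in the vanishing ideal `I_C`: vanishing at every codeword. -/
def InVanishingIdeal {n : ℕ} (C : Finset (Finset (Fin n)))
    (p : MvPolynomial (Fin n) (ZMod 2)) : Prop :=
  ∀ c ∈ C, eval (evalPt c) p = 0

/-- `(σ, τ)` gives an element `x^σ(1-x)^τ` of the canonical form `CF(I_C)`:
a squarefree pseudomonomial in `I_C`, minimal with respect to divisibility
among squarefree pseudomonomials in `I_C`. -/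
def InCanonicalForm {n : ℕ} (C : Finset (Finset (Fin n))) (σ τ : Finset (Fin n)) : Prop :=
  Disjoint σ τ ∧ InVanishingIdeal C (pseudoMonomial σ τ) ∧
    ∀ σ' τ' : Finset (Fin n), Disjoint σ' τ' →
      InVanishingIdeal C (pseudoMonomial σ' τ') →
      pseudoMonomial σ' τ' ∣ pseudoMonomial σ τ →
      pseudoMonomial σ' τ' = pseudoMonomial σ τ

/-- A code is intersection-complete if it is closed under pairwise intersections. -/
def IntersectionComplete {n : ℕ} (C : Finset (Finset (Fin n))) : Prop :=
  ∀ σ ∈ C, ∀ τ ∈ C, σ ∩ τ ∈ C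

/-- Evaluation of a pseudomonomial at the indicator vector of a set `c`. -/
lemma eval_pseudoMonomial {n : ℕ} (σ τ c : Finset (Fin n)) :
    eval (evalPt c) (pseudoMonomial σ τ) =
      if σ ⊆ c ∧ ∀ j ∈ τ, j ∉ c then 1 else 0 := by
  have h1 : eval (evalPt c) (∏ j ∈ τ, (1 - X j : MvPolynomial (Fin n) (ZMod 2)))
      = if ∀ j ∈ τ, j ∉ c then 1 else 0 := by
    rw [map_prod]
    rw [show (∏ j ∈ τ, eval (evalPt c) (1 - X j)) = ∏ j ∈ τ, if j ∉ c then (1:ZMod 2) else 0 by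
      refine Finset.prod_congr rfl fun j _ => ?_
      rw [map_sub, map_one, eval_X]
      unfold evalPt
      by_cases h : j ∈ c <;> simp [h]]
    rw [Finset.prod_boole (M₀ := ZMod 2) (p := fun j => j ∉ c) (s := τ)]
    congr 1
  have h2 : eval (evalPt c) (∏ i ∈ σ, (X i : MvPolynomial (Fin n) (ZMod 2)))
      = if σ ⊆ c then 1 else 0 := by
    rw [map_prod]
    rw [show (∏ i ∈ σ, eval (evalPt c) (X i)) = ∏ i ∈ σ, if i ∈ c then (1:ZMod 2) else 0 by
      refine Finset.prod_congr rfl fun i _ => ?_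
      rw [eval_X]; rfl]
    rw [Finset.prod_boole]
    simp [Finset.subset_iff]
  rw [pseudoMonomial, map_mul, h1, h2]
  by_cases ha : σ ⊆ c <;> by_cases hb : ∀ j ∈ τ, j ∉ c <;> simp [ha, hb]

lemma pseudoMonomial_dvd {n : ℕ} {σ' τ' σ τ : Finset (Fin n)} (hσ : σ' ⊆ σ) (hτ : τ' ⊆ τ) :
    pseudoMonomial σ' τ' ∣ pseudoMonomial σ τ :=
  mul_dvd_mul (Finset.prod_dvd_prod_of_subset _ _ _ hσ) (Finset.prod_dvd_prod_of_subset _ _ _ hτ)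

lemma eval_one_of_dvd {n : ℕ} {p q : MvPolynomial (Fin n) (ZMod 2)} (h : p ∣ q)
    (x : Fin n → ZMod 2) (hq : eval x q = 1) : eval x p = 1 := by
  obtain ⟨r, rfl⟩ := h
  rw [map_mul] at hq
  have h2 : ∀ a : ZMod 2, a = 0 ∨ a = 1 := by decide
  rcases h2 (eval x p) with h3 | h3
  · rw [h3, zero_mul] at hq; exact absurd hq.symm one_ne_zero
  · exact h3

lemma inVanishing_iff {n : ℕ} (C : Finset (Finset (Fin n))) (σ τ : Finset (Fin n)) :
    InVanishingIdeal C (pseudoMonomial σ τ) ↔ ∀ c ∈ C, σ ⊆ c → ∃ j ∈ τ, j ∈ c := by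
  unfold InVanishingIdeal
  simp only [eval_pseudoMonomial, ite_eq_right_iff, one_ne_zero]
  constructor
  · intro h c hc hσc
    by_contra hcon
    push_neg at hcon
    exact (h c hc ⟨hσc, fun j hj hjc => hcon j hj hjc⟩).elim
  · intro h c hc hcon
    obtain ⟨hσc, hτc⟩ := hcon
    obtain ⟨j, hj, hjc⟩ := h c hc hσc
    exact absurd hjc (hτc j hj)

/-- A code `C` is intersection-complete iff every element `x^σ(1-x)^τ` of the
canonical form `CF(I_C)` satisfies `|τ| ≤ 1`. -/
theorem intersectionComplete_iff_canonicalForm_linear_in_one_minus_x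
    (n : ℕ) (C : Finset (Finset (Fin n))) :
    IntersectionComplete C ↔
      ∀ σ τ : Finset (Fin n), InCanonicalForm C σ τ → τ.card ≤ 1 := by
  classical
  constructor
  · -- intersection-complete ⇒ canonical form linear in (1-x) factors
    rintro hIC σ τ ⟨hdisj, hvan, hmin⟩
    by_cases hS : ∃ c ∈ C, σ ⊆ c
    · -- some codeword contains σ
      set S : Finset (Finset (Fin n)) := C.filter (fun c => σ ⊆ c) with hSdef
      have hSne : S.Nonempty := by
        obtain ⟨c, hc, hσc⟩ := hS
        exact ⟨c, by simp [hSdef, hc, hσc]⟩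
      set m := S.inf' hSne id with hm
      have hmC : m ∈ C := by
        refine Finset.inf'_mem (↑C) ?_ S hSne id ?_
        · intro x hx y hy; exact hIC x hx y hy
        · intro c hc; exact (Finset.mem_filter.mp hc).1
      have hσm : σ ⊆ m := by
        rw [hm]
        exact Finset.le_inf' hSne id fun c hc => (Finset.mem_filter.mp hc).2
      obtain ⟨j, hjτ, hjm⟩ := (inVanishing_iff C σ τ).mp hvan m hmC hσm
      have hj : ∀ c ∈ C, σ ⊆ c → j ∈ c := by
        intro c hc hσc
        have : m ≤ c := Finset.inf'_le id (by simp [hSdef, hc, hσc])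
        exact this hjm
      have hjσ : j ∉ σ := fun h => Finset.disjoint_left.mp hdisj h hjτ
      have hdisj' : Disjoint σ ({j} : Finset (Fin n)) := by
        simp [Finset.disjoint_singleton_right, hjσ]
      have hvan' : InVanishingIdeal C (pseudoMonomial σ {j}) := by
        rw [inVanishing_iff]
        intro c hc hσc
        exact ⟨j, Finset.mem_singleton_self j, hj c hc hσc⟩
      have heq := hmin σ {j} hdisj' hvan'
        (pseudoMonomial_dvd subset_rfl (Finset.singleton_subset_iff.mpr hjτ))
      have hτj : τ ⊆ {j} := by
        intro k hk
        rw [Finset.mem_singleton]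
        by_contra hkj
        have hkσ : k ∉ σ := fun h => Finset.disjoint_left.mp hdisj h hk
        have h1 : eval (evalPt (σ ∪ {k})) (pseudoMonomial σ {j}) = 1 := by
          rw [eval_pseudoMonomial, if_pos]
          constructor
          · exact Finset.subset_union_left
          · intro i hi
            rw [Finset.mem_singleton] at hi
            subst hi
            simp [Finset.mem_union, hjσ, Ne.symm hkj]
        have h2 : eval (evalPt (σ ∪ {k})) (pseudoMonomial σ τ) = 0 := by
          rw [eval_pseudoMonomial, if_neg]
          rintro ⟨-, h⟩
          exact h k hk (by simp)
        rw [heq, h2] at h1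
        exact one_ne_zero h1.symm
      calc τ.card ≤ ({j} : Finset (Fin n)).card := Finset.card_le_card hτj
        _ = 1 := Finset.card_singleton j
    · -- no codeword contains σ : then x^σ ∈ I_C and minimality forces τ = ∅
      push_neg at hS
      have hvan' : InVanishingIdeal C (pseudoMonomial σ ∅) := by
        rw [inVanishing_iff]
        intro c hc hσc
        exact absurd hσc (hS c hc)
      have heq := hmin σ ∅ (Finset.disjoint_empty_right σ) hvan'
        (pseudoMonomial_dvd subset_rfl (Finset.empty_subset τ))
      rcases τ.eq_empty_or_nonempty with h | ⟨k, hk⟩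
      · simp [h]
      · exfalso
        have h1 : eval (evalPt (σ ∪ {k})) (pseudoMonomial σ ∅) = 1 := by
          rw [eval_pseudoMonomial, if_pos]
          exact ⟨Finset.subset_union_left, by simp⟩
        have h2 : eval (evalPt (σ ∪ {k})) (pseudoMonomial σ τ) = 0 := by
          rw [eval_pseudoMonomial, if_neg]
          rintro ⟨-, h⟩
          exact h k hk (by simp)
        rw [heq, h2] at h1
        exact one_ne_zero h1.symm
  · -- canonical form linear ⇒ intersection-complete
    intro hCF a ha b hb
    by_contra hab
    set ν := a ∩ b with hν
    -- the indicator pseudomonomial of ν lies in I_C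
    have hP : ∃ k : ℕ, ∃ σ' τ' : Finset (Fin n), σ' ⊆ ν ∧ τ' ⊆ νᶜ ∧ Disjoint σ' τ' ∧
        InVanishingIdeal C (pseudoMonomial σ' τ') ∧ σ'.card + τ'.card = k := by
      refine ⟨ν.card + νᶜ.card, ν, νᶜ, subset_rfl, subset_rfl, disjoint_compl_right,
        ?_, rfl⟩
      rw [inVanishing_iff]
      intro c hc hνc
      have hne : ν ≠ c := fun h => hab (h ▸ hc)
      obtain ⟨j, hjc, hjν⟩ := Finset.exists_of_ssubset (lt_of_le_of_ne hνc hne)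
      exact ⟨j, Finset.mem_compl.mpr hjν, hjc⟩
    obtain ⟨σ', τ', hσν, hτν, hd, hv, hmincard⟩ := Nat.find_spec hP
    -- (σ', τ') is in the canonical form
    have hCFmem : InCanonicalForm C σ' τ' := by
      refine ⟨hd, hv, ?_⟩
      intro σ'' τ'' hd'' hv'' hdvd
      have hσ'' : σ'' ⊆ σ' := by
        have h1 : eval (evalPt σ') (pseudoMonomial σ' τ') = 1 := by
          rw [eval_pseudoMonomial, if_pos]
          exact ⟨subset_rfl, fun j hj => Finset.disjoint_right.mp hd hj⟩
        have h2 := eval_one_of_dvd hdvd _ h1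
        rw [eval_pseudoMonomial] at h2
        by_cases hcond : σ'' ⊆ σ' ∧ ∀ j ∈ τ'', j ∉ σ'
        · exact hcond.1
        · rw [if_neg hcond] at h2; exact absurd h2.symm one_ne_zero
      have hτ'' : τ'' ⊆ τ' := by
        have h1 : eval (evalPt τ'ᶜ) (pseudoMonomial σ' τ') = 1 := by
          rw [eval_pseudoMonomial, if_pos]
          refine ⟨fun i hi => Finset.mem_compl.mpr (Finset.disjoint_left.mp hd hi),
            fun j hj hjc => (Finset.mem_compl.mp hjc) hj⟩
        have h2 := eval_one_of_dvd hdvd _ h1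
        rw [eval_pseudoMonomial] at h2
        by_cases hcond : σ'' ⊆ τ'ᶜ ∧ ∀ j ∈ τ'', j ∉ τ'ᶜ
        · intro j hj
          by_contra hjτ'
          exact hcond.2 j hj (Finset.mem_compl.mpr hjτ')
        · rw [if_neg hcond] at h2; exact absurd h2.symm one_ne_zero
      have hle : Nat.find hP ≤ σ''.card + τ''.card :=
        Nat.find_min' hP ⟨σ'', τ'', hσ''.trans hσν, hτ''.trans hτν, hd'', hv'', rfl⟩
      rw [← hmincard] at hle
      have hcards : σ''.card ≤ σ'.card := Finset.card_le_card hσ''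
      have hcardt : τ''.card ≤ τ'.card := Finset.card_le_card hτ''
      have e1 : σ'' = σ' := Finset.eq_of_subset_of_card_le hσ'' (by omega)
      have e2 : τ'' = τ' := Finset.eq_of_subset_of_card_le hτ'' (by omega)
      rw [e1, e2]
    have hcard := hCF σ' τ' hCFmem
    rw [inVanishing_iff] at hv
    obtain ⟨j, hjτ, hja⟩ := hv a ha (hσν.trans Finset.inter_subset_left)
    obtain ⟨k, hkτ, hkb⟩ := hv b hb (hσν.trans Finset.inter_subset_right)
    have hjk : j = k := Finset.card_le_one.mp hcard j hjτ k hkτ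
    subst hjk
    have hjν : j ∈ ν := Finset.mem_inter.mpr ⟨hja, hkb⟩
    exact Finset.mem_compl.mp (hτν hjτ) hjν
end

section
/- A combinatorial code C on n neurons is union-complete if and only if every element of the canonical form CF(I_C) is at most linear in the x_i factors; that is, if x^σ(1−x)^τ ∈ CF(I_C), then |σ| ≤ 1. -/
open MvPolynomial

/-- A code is union-complete if it is closed under pairwise unions. -/
def UnionComplete {n : ℕ} (C : Finset (Finset (Fin n))) : Prop :=
  ∀ σ ∈ C, ∀ τ ∈ C, σ ∪ τ ∈ C

/-!
The squarefree pseudomonomial `x^σ(1-x)^τ` vanishes on `C` iff no codeword contains `σ` and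
avoids `τ`, and for disjoint `σ, τ` divisibility of such monomials is inclusion of both index sets.

If `x^σ(1-x)^τ ∈ CF(I_C)` and `i ≠ j` lie in `σ`, minimality yields codewords containing `σ ∖ {i}`,
resp. `σ ∖ {j}`, and avoiding `τ`; their union contains `σ` and avoids `τ`, so it is not in `C`.
Conversely, if `a, b ∈ C` but `a ∪ b ∉ C`, then `x^(a ∪ b)(1-x)^(a ∪ b)ᶜ ∈ I_C` is divisible by
some `x^σ(1-x)^τ ∈ CF(I_C)`; when `|σ| ≤ 1`, `σ` lies in `a` or in `b`, and that codeword
avoids `τ`.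
-/

theorem Finset.subset_or_subset_of_card_le_one {α : Type*} [DecidableEq α] {s a b : Finset α}
    (hs : s.card ≤ 1) (h : s ⊆ a ∪ b) : s ⊆ a ∨ s ⊆ b := by
  by_contra! hab
  obtain ⟨⟨x, hx, hxa⟩, ⟨y, hy, hyb⟩⟩ := And.imp Finset.not_subset.mp Finset.not_subset.mp hab
  obtain rfl := Finset.card_le_one.mp hs x hx y hy
  exact (Finset.mem_union.mp (h hx)).elim hxa hyb

namespace CombinatorialCode

variable {n : ℕ}

theorem eval_evalPt_pseudoMonomial (c σ τ : Finset (Fin n)) :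
    eval (evalPt c) (pseudoMonomial σ τ) = if σ ⊆ c ∧ Disjoint τ c then 1 else 0 := by
  have one_sub : ∀ j, 1 - evalPt c j = if j ∉ c then 1 else 0 := fun j => by
    by_cases hj : j ∈ c <;> simp [evalPt, hj]
  simp only [pseudoMonomial, map_mul, map_prod, map_sub, map_one, eval_X, one_sub]
  simp only [evalPt, Finset.prod_ite_zero, Finset.prod_const_one, ite_zero_mul_ite_zero, mul_one,
    Finset.subset_iff, Finset.disjoint_left]

theorem inVanishingIdeal_pseudoMonomial_iff (C : Finset (Finset (Fin n))) (σ τ : Finset (Fin n)) :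
    InVanishingIdeal C (pseudoMonomial σ τ) ↔ ∀ c ∈ C, ¬(σ ⊆ c ∧ Disjoint τ c) := by
  simp [InVanishingIdeal, eval_evalPt_pseudoMonomial]

theorem pseudoMonomial_dvd_iff {σ τ σ' τ' : Finset (Fin n)} (h : Disjoint σ τ) :
    pseudoMonomial σ' τ' ∣ pseudoMonomial σ τ ↔ σ' ⊆ σ ∧ τ' ⊆ τ := by
  refine ⟨fun hdvd => ?_, fun ⟨hσ, hτ⟩ =>
    mul_dvd_mul (Finset.prod_dvd_prod_of_subset _ _ _ hσ) (Finset.prod_dvd_prod_of_subset _ _ _ hτ)⟩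
  -- Test at the points `σ` and `τᶜ`, where `x^σ(1-x)^τ` takes the value `1`.
  have nonvanishing : ∀ c, σ ⊆ c → Disjoint τ c → σ' ⊆ c ∧ Disjoint τ' c := fun c hσ hτ => by
    by_contra hc
    have := map_dvd (eval (evalPt c)) hdvd
    rw [eval_evalPt_pseudoMonomial c σ τ, eval_evalPt_pseudoMonomial c σ' τ', if_neg hc,
      if_pos ⟨hσ, hτ⟩, zero_dvd_iff] at this
    exact one_ne_zero this
  exact ⟨(nonvanishing σ le_rfl h.symm).1, disjoint_compl_right_iff.mp
    (nonvanishing τᶜ (le_compl_iff_disjoint_right.mpr h) disjoint_compl_right).2⟩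

theorem inCanonicalForm_iff (C : Finset (Finset (Fin n))) (σ τ : Finset (Fin n)) :
    InCanonicalForm C σ τ ↔ Disjoint σ τ ∧ InVanishingIdeal C (pseudoMonomial σ τ) ∧
      ∀ σ' ⊆ σ, ∀ τ' ⊆ τ, InVanishingIdeal C (pseudoMonomial σ' τ') → σ' = σ ∧ τ' = τ := by
  refine and_congr_right fun h => and_congr_right fun _ => ⟨fun hmin σ' hσ τ' hτ hI => ?_,
    fun hmin σ' τ' _ hI hdvd => ?_⟩
  · have h' : Disjoint σ' τ' := h.mono hσ hτ
    have hdvd := (hmin σ' τ' h' hI ((pseudoMonomial_dvd_iff h).mpr ⟨hσ, hτ⟩)).symm.dvd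
    obtain ⟨hσ', hτ'⟩ := (pseudoMonomial_dvd_iff h').mp hdvd
    exact ⟨hσ.antisymm hσ', hτ.antisymm hτ'⟩
  · obtain ⟨hσ, hτ⟩ := (pseudoMonomial_dvd_iff h).mp hdvd
    obtain ⟨rfl, rfl⟩ := hmin σ' hσ τ' hτ hI
    rfl

theorem exists_inCanonicalForm_of_inVanishingIdeal {C : Finset (Finset (Fin n))}
    {σ τ : Finset (Fin n)} (h : Disjoint σ τ) (hI : InVanishingIdeal C (pseudoMonomial σ τ)) :
    ∃ σ' ⊆ σ, ∃ τ' ⊆ τ, InCanonicalForm C σ' τ' := by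
  classical
  -- A divisor of least degree is minimal.
  obtain ⟨⟨σ', τ'⟩, hmem, hleast⟩ := Finset.exists_min_image
    ((σ.powerset ×ˢ τ.powerset).filter fun p => InVanishingIdeal C (pseudoMonomial p.1 p.2))
    (fun p => p.1.card + p.2.card) ⟨(σ, τ), by simp [hI]⟩
  simp only [Finset.mem_filter, Finset.mem_product, Finset.mem_powerset] at hmem
  obtain ⟨⟨hσ, hτ⟩, hI'⟩ := hmem
  refine ⟨σ', hσ, τ', hτ, (inCanonicalForm_iff C σ' τ').mpr
    ⟨h.mono hσ hτ, hI', fun σ'' hσ' τ'' hτ' hI'' => ?_⟩⟩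
  have : σ'.card + τ'.card ≤ σ''.card + τ''.card :=
    hleast (σ'', τ'') (by simp [hσ'.trans hσ, hτ'.trans hτ, hI''])
  have := Finset.card_le_card hσ'
  have := Finset.card_le_card hτ'
  exact ⟨Finset.eq_of_subset_of_card_le hσ' (by omega),
    Finset.eq_of_subset_of_card_le hτ' (by omega)⟩

theorem exists_mem_erase_subset_of_inCanonicalForm {C : Finset (Finset (Fin n))}
    {σ τ : Finset (Fin n)} (h : InCanonicalForm C σ τ) {k : Fin n} (hk : k ∈ σ) :
    ∃ c ∈ C, σ.erase k ⊆ c ∧ Disjoint τ c := by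
  obtain ⟨-, -, hmin⟩ := (inCanonicalForm_iff C σ τ).mp h
  by_contra! hnone
  have := (hmin _ (σ.erase_subset k) τ le_rfl
    ((inVanishingIdeal_pseudoMonomial_iff C _ τ).mpr fun c hc ⟨hσ, hτ⟩ => hnone c hc hσ hτ)).1
  exact Finset.notMem_erase k σ (by rwa [this])

theorem card_le_one_of_unionComplete {C : Finset (Finset (Fin n))} (hC : UnionComplete C)
    {σ τ : Finset (Fin n)} (h : InCanonicalForm C σ τ) : σ.card ≤ 1 := by
  by_contra! hcard
  obtain ⟨i, hi, j, hj, hij⟩ := Finset.one_lt_card.mp hcard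
  obtain ⟨ci, hci, hσi, hτi⟩ := exists_mem_erase_subset_of_inCanonicalForm h hi
  obtain ⟨cj, hcj, hσj, hτj⟩ := exists_mem_erase_subset_of_inCanonicalForm h hj
  have hσ : σ ⊆ ci ∪ cj := fun x hx => by
    by_cases hxi : x = i
    · exact Finset.mem_union_right _ (hσj (Finset.mem_erase.mpr ⟨hxi ▸ hij, hx⟩))
    · exact Finset.mem_union_left _ (hσi (Finset.mem_erase.mpr ⟨hxi, hx⟩))
  exact (inVanishingIdeal_pseudoMonomial_iff C σ τ).mp h.2.1 _ (hC ci hci cj hcj)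
    ⟨hσ, Finset.disjoint_union_right.mpr ⟨hτi, hτj⟩⟩

theorem unionComplete_of_forall_inCanonicalForm_card_le_one {C : Finset (Finset (Fin n))}
    (hCF : ∀ σ τ : Finset (Fin n), InCanonicalForm C σ τ → σ.card ≤ 1) : UnionComplete C := by
  intro a ha b hb
  by_contra hab
  -- `a ∪ b` is the only point where `x^(a ∪ b) (1-x)^(a ∪ b)ᶜ` does not vanish.
  have hI : InVanishingIdeal C (pseudoMonomial (a ∪ b) (a ∪ b)ᶜ) :=
    (inVanishingIdeal_pseudoMonomial_iff C _ _).mpr fun c hc ⟨hσ, hτ⟩ =>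
      hab (hσ.antisymm' (disjoint_compl_left_iff.mp hτ) ▸ hc)
  obtain ⟨σ, hσ, τ, hτ, h⟩ := exists_inCanonicalForm_of_inVanishingIdeal disjoint_compl_right hI
  have hτ' (c) (hc : c ⊆ a ∪ b) : Disjoint τ c :=
    (disjoint_compl_left_iff.mpr hc).mono_left hτ
  have hvanish := (inVanishingIdeal_pseudoMonomial_iff C σ τ).mp h.2.1
  rcases Finset.subset_or_subset_of_card_le_one (hCF σ τ h) hσ with hσa | hσb
  · exact hvanish a ha ⟨hσa, hτ' a Finset.subset_union_left⟩
  · exact hvanish b hb ⟨hσb, hτ' b Finset.subset_union_right⟩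

end CombinatorialCode

/-- A code `C` is union-complete iff every element `x^σ(1-x)^τ` of the
canonical form `CF(I_C)` satisfies `|σ| ≤ 1`. -/
theorem unionComplete_iff_canonicalForm_linear_in_x
    (n : ℕ) (C : Finset (Finset (Fin n))) :
    UnionComplete C ↔
      ∀ σ τ : Finset (Fin n), InCanonicalForm C σ τ → σ.card ≤ 1 :=
  ⟨fun hC _ _ => CombinatorialCode.card_le_one_of_unionComplete hC,
    CombinatorialCode.unionComplete_of_forall_inCanonicalForm_card_le_one⟩
end

section
/- Let C be a nonempty combinatorial code on n neurons and let Γ = CF(I_C) be the canonical form of its vanishing ideal. Set Γ̂ = {x^σ(1−x)^τ ∈ Γ : |τ| ≤ 1}. Then Γ̂ is exactly the canonical form CF(I_Ĉ) of the vanishing ideal of the intersection completion Ĉ of C. -/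
open MvPolynomial

/-- The intersection completion of `C`: all intersections of nonempty
subfamilies of `C`. -/
def interCompletion {n : ℕ} (C : Finset (Finset (Fin n))) : Finset (Finset (Fin n)) :=
  (C.powerset.filter (· ≠ ∅)).image (fun S => S.inf id)

/-! ### Auxiliary lemmas -/

lemma eval_pm {n : ℕ} (c σ τ : Finset (Fin n)) :
    eval (evalPt c) (pseudoMonomial σ τ)
      = if σ ⊆ c ∧ Disjoint τ c then 1 else 0 := by
  have h1 : (∏ i ∈ σ, eval (evalPt c) (X i : MvPolynomial (Fin n) (ZMod 2)))
      = if σ ⊆ c then 1 else 0 := by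
    by_cases h : σ ⊆ c
    · rw [if_pos h]
      exact Finset.prod_eq_one fun i hi => by simp [evalPt, h hi]
    · rw [if_neg h]
      obtain ⟨i, hi, hic⟩ := Finset.not_subset.mp h
      exact Finset.prod_eq_zero hi (by simp [evalPt, hic])
  have h2 : (∏ j ∈ τ, eval (evalPt c) ((1 - X j : MvPolynomial (Fin n) (ZMod 2))))
      = if Disjoint τ c then 1 else 0 := by
    by_cases h : Disjoint τ c
    · rw [if_pos h]
      exact Finset.prod_eq_one fun j hj => by
        simp [evalPt, Finset.disjoint_left.mp h hj]
    · rw [if_neg h]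
      obtain ⟨j, hj, hjc⟩ := Finset.not_disjoint_iff.mp h
      exact Finset.prod_eq_zero hj (by simp [evalPt, hjc])
  simp only [pseudoMonomial, map_mul, map_prod] at *
  rw [h1, h2]
  by_cases hA : σ ⊆ c <;> by_cases hB : Disjoint τ c <;> simp [hA, hB]

lemma inVI_iff {n : ℕ} (C : Finset (Finset (Fin n))) (σ τ : Finset (Fin n)) :
    InVanishingIdeal C (pseudoMonomial σ τ) ↔ ∀ c ∈ C, ¬(σ ⊆ c ∧ Disjoint τ c) := by
  unfold InVanishingIdeal
  refine forall₂_congr fun c _ => ?_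
  rw [eval_pm]
  by_cases h : σ ⊆ c ∧ Disjoint τ c <;> simp [h]

lemma pm_dvd {n : ℕ} {σ' τ' σ τ : Finset (Fin n)} (h1 : σ' ⊆ σ) (h2 : τ' ⊆ τ) :
    pseudoMonomial σ' τ' ∣ pseudoMonomial σ τ :=
  mul_dvd_mul (Finset.prod_dvd_prod_of_subset _ _ _ h1)
    (Finset.prod_dvd_prod_of_subset _ _ _ h2)

lemma pm_dvd_sub {n : ℕ} {σ' τ' σ τ : Finset (Fin n)} (hd : Disjoint σ τ)
    (h : pseudoMonomial σ' τ' ∣ pseudoMonomial σ τ) : σ' ⊆ σ ∧ τ' ⊆ τ := by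
  obtain ⟨k, hk⟩ := h
  have key : ∀ c : Finset (Fin n), σ ⊆ c → Disjoint τ c → (σ' ⊆ c ∧ Disjoint τ' c) := by
    intro c hc1 hc2
    have := congrArg (eval (evalPt c)) hk
    rw [map_mul, eval_pm, eval_pm, if_pos ⟨hc1, hc2⟩] at this
    by_contra hcon
    rw [if_neg hcon, zero_mul] at this
    exact one_ne_zero this
  constructor
  · exact (key σ subset_rfl hd.symm).1
  · have h2 := key (Finset.univ \ τ) (fun i hi => by
      simp [Finset.disjoint_left.mp hd hi]) (by simp [Finset.disjoint_sdiff])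
    intro j hj
    by_contra hjt
    exact (Finset.disjoint_left.mp h2.2 hj) (by simp [hjt])

lemma pm_inj {n : ℕ} {σ' τ' σ τ : Finset (Fin n)} (hd : Disjoint σ τ) (hd' : Disjoint σ' τ')
    (h : pseudoMonomial σ' τ' = pseudoMonomial σ τ) : σ' = σ ∧ τ' = τ := by
  have h1 := pm_dvd_sub hd (dvd_of_eq h)
  have h2 := pm_dvd_sub hd' (dvd_of_eq h.symm)
  exact ⟨subset_antisymm h1.1 h2.1, subset_antisymm h1.2 h2.2⟩

lemma mem_interCompletion {n : ℕ} {C : Finset (Finset (Fin n))} {c : Finset (Fin n)} :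
    c ∈ interCompletion C ↔ ∃ S, S ⊆ C ∧ S.Nonempty ∧ c = S.inf id := by
  simp only [interCompletion, Finset.mem_image, Finset.mem_filter, Finset.mem_powerset,
    ← Finset.nonempty_iff_ne_empty]
  constructor
  · rintro ⟨S, ⟨hS, hne⟩, rfl⟩; exact ⟨S, hS, hne, rfl⟩
  · rintro ⟨S, hS, hne, rfl⟩; exact ⟨S, ⟨hS, hne⟩, rfl⟩

lemma subset_interCompletion {n : ℕ} (C : Finset (Finset (Fin n))) :
    C ⊆ interCompletion C := by
  intro s hs
  exact mem_interCompletion.mpr ⟨{s}, Finset.singleton_subset_iff.mpr hs,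
    Finset.singleton_nonempty s, by simp⟩

/-- Claim B: a pseudomonomial with `|τ| ≤ 1` vanishing on `C` also vanishes on the
intersection completion. -/
lemma vi_hat_of_vi {n : ℕ} {C : Finset (Finset (Fin n))} {σ τ : Finset (Fin n)}
    (hτ : τ.card ≤ 1) (h : InVanishingIdeal C (pseudoMonomial σ τ)) :
    InVanishingIdeal (interCompletion C) (pseudoMonomial σ τ) := by
  rw [inVI_iff] at h ⊢
  rintro c hc ⟨hσc, hτc⟩
  obtain ⟨S, hS, hne, rfl⟩ := mem_interCompletion.mp hc
  rcases τ.eq_empty_or_nonempty with rfl | hτne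
  · obtain ⟨s, hs⟩ := hne
    exact h s (hS hs) ⟨hσc.trans (Finset.le_iff_subset.mp (Finset.inf_le hs)), Finset.disjoint_empty_left s⟩
  · obtain ⟨j, rfl⟩ := Finset.card_eq_one.mp (le_antisymm hτ hτne.card_pos)
    have hjS : ∃ s ∈ S, j ∉ s := by
      by_contra hcon
      push_neg at hcon
      have : j ∈ S.inf id := by
        have : ({j} : Finset (Fin n)) ≤ S.inf id :=
          Finset.le_inf fun s hs => Finset.singleton_subset_iff.mpr (hcon s hs)
        exact this (Finset.mem_singleton_self j)
      exact (Finset.disjoint_left.mp hτc (Finset.mem_singleton_self j)) this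
    obtain ⟨s, hs, hjs⟩ := hjS
    exact h s (hS hs) ⟨hσc.trans (Finset.le_iff_subset.mp (Finset.inf_le hs)),
      Finset.disjoint_singleton_left.mpr hjs⟩

/-- Claim A: a canonical-form element of the intersection completion has `|τ| ≤ 1`. -/
lemma card_le_one_of_cf_hat {n : ℕ} {C : Finset (Finset (Fin n))} {σ τ : Finset (Fin n)}
    (h : InCanonicalForm (interCompletion C) σ τ) : τ.card ≤ 1 := by
  by_contra hcard
  push_neg at hcard
  obtain ⟨hd, hvi, hmin⟩ := h
  set F := C.filter (fun s => σ ⊆ s) with hFdef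
  rcases F.eq_empty_or_nonempty with hF | hF
  · -- no codeword contains σ, so x^σ is already in the ideal; contradicts minimality
    have hvi0 : InVanishingIdeal (interCompletion C) (pseudoMonomial σ ∅) := by
      rw [inVI_iff]
      rintro c hc ⟨hσc, -⟩
      obtain ⟨S, hS, ⟨s, hs⟩, rfl⟩ := mem_interCompletion.mp hc
      have : s ∈ F := Finset.mem_filter.mpr ⟨hS hs, hσc.trans (Finset.le_iff_subset.mp (Finset.inf_le hs))⟩
      simp [hF] at this
    have heq := hmin σ ∅ (Finset.disjoint_empty_right σ) hvi0
      (pm_dvd subset_rfl (Finset.empty_subset τ))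
    have := (pm_inj hd (Finset.disjoint_empty_right σ) heq).2
    rw [← this] at hcard
    simp at hcard
  · -- m = intersection of all codewords containing σ
    set m := F.inf id with hm
    have hmhat : m ∈ interCompletion C :=
      mem_interCompletion.mpr ⟨F, Finset.filter_subset _ _, hF, rfl⟩
    have hσm : σ ⊆ m := Finset.le_inf fun s hs => (Finset.mem_filter.mp hs).2
    have hnd : ¬ Disjoint τ m := fun hdis =>
      (inVI_iff _ _ _).mp hvi m hmhat ⟨hσm, hdis⟩
    obtain ⟨k, hkτ, hkm⟩ := Finset.not_disjoint_iff.mp hnd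
    have hviK : InVanishingIdeal (interCompletion C) (pseudoMonomial σ {k}) := by
      rw [inVI_iff]
      rintro c hc ⟨hσc, hkc⟩
      obtain ⟨S, hS, hne, rfl⟩ := mem_interCompletion.mp hc
      have hmc : m ⊆ S.inf id := Finset.le_iff_subset.mp (Finset.le_inf fun s hs =>
        Finset.inf_le (Finset.mem_filter.mpr ⟨hS hs, hσc.trans (Finset.le_iff_subset.mp (Finset.inf_le hs))⟩))
      exact Finset.disjoint_left.mp hkc (Finset.mem_singleton_self k) (hmc hkm)
    have hdk : Disjoint σ ({k} : Finset (Fin n)) :=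
      Finset.disjoint_singleton_right.mpr (Finset.disjoint_right.mp hd hkτ)
    have heq := hmin σ {k} hdk hviK
      (pm_dvd subset_rfl (Finset.singleton_subset_iff.mpr hkτ))
    have := (pm_inj hd hdk heq).2
    rw [← this] at hcard
    simp at hcard

/-- For a nonempty code `C`, the subset `Γ̂ = {x^σ(1-x)^τ ∈ CF(I_C) : |τ| ≤ 1}`
of the canonical form of `C` is exactly the canonical form of the vanishing
ideal of the intersection completion of `C`. -/
theorem canonicalForm_of_interCompletion
    (n : ℕ) (C : Finset (Finset (Fin n))) (hC : C.Nonempty) :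
    ∀ σ τ : Finset (Fin n),
      (InCanonicalForm C σ τ ∧ τ.card ≤ 1) ↔ InCanonicalForm (interCompletion C) σ τ := by
  intro σ τ
  constructor
  · rintro ⟨⟨hd, hvi, hmin⟩, hcard⟩
    refine ⟨hd, vi_hat_of_vi hcard hvi, ?_⟩
    intro σ' τ' hd' hvi' hdvd
    exact hmin σ' τ' hd' (fun c hc => hvi' c (subset_interCompletion C hc)) hdvd
  · intro h
    have hcard := card_le_one_of_cf_hat h
    obtain ⟨hd, hvi, hmin⟩ := h
    refine ⟨⟨hd, fun c hc => hvi c (subset_interCompletion C hc), ?_⟩, hcard⟩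
    intro σ' τ' hd' hvi' hdvd
    have hsub := pm_dvd_sub hd hdvd
    exact hmin σ' τ' hd'
      (vi_hat_of_vi (le_trans (Finset.card_le_card hsub.2) hcard) hvi') hdvd
end

section
/- Let C be a nonempty combinatorial code on n neurons and let Γ = CF(I_C) be the canonical form of its vanishing ideal. Set Γ' = {x^σ(1−x)^τ ∈ Γ : |σ| ≤ 1}. Then Γ' is exactly the canonical form CF(I_Č) of the vanishing ideal of the union completion Č of C. -/
/-!
A squarefree pseudomonomial `x^σ(1-x)^τ` is nonzero exactly at the codewords `c` with `σ ⊆ c` and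
`τ ∩ c = ∅`, so membership in a vanishing ideal and divisibility become set conditions.
When `|σ| ≤ 1` such a codeword exists in `Č` iff it exists in `C`: a union of codewords avoiding
`τ` that contains `i` has a member containing `i`. And no generator of `CF(I_Č)` has `|σ| ≥ 2`:
its proper divisors `x_i(1-x)^τ`, `i ∈ σ`, are nonzero at codewords of `Č`, and at the union of
these codewords `x^σ(1-x)^τ` is nonzero.
-/

open MvPolynomial

/-- The union completion of `C`: all unions of nonempty subfamilies of `C`. -/
def unionCompletion {n : ℕ} (C : Finset (Finset (Fin n))) : Finset (Finset (Fin n)) :=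
  (C.powerset.filter (· ≠ ∅)).image (fun S => S.sup id)

section PseudoMonomial

variable {n : ℕ} {σ τ σ' τ' : Finset (Fin n)}

lemma eval_evalPt_pseudoMonomial (c : Finset (Fin n)) :
    eval (evalPt c) (pseudoMonomial σ τ) = if σ ⊆ c ∧ Disjoint τ c then 1 else 0 := by
  have h_one_sub (j : Fin n) : 1 - evalPt c j = if j ∉ c then 1 else 0 := by
    by_cases hj : j ∈ c <;> simp [evalPt, hj]
  simp only [pseudoMonomial, map_mul, map_prod, map_sub, map_one, eval_X, h_one_sub]
  simp only [evalPt, Finset.prod_boole, ite_zero_mul_ite_zero, mul_one, Finset.disjoint_left]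
  exact if_congr Iff.rfl rfl rfl

lemma eval_evalPt_pseudoMonomial_ne_zero_iff (c : Finset (Fin n)) :
    eval (evalPt c) (pseudoMonomial σ τ) ≠ 0 ↔ σ ⊆ c ∧ Disjoint τ c := by
  rw [eval_evalPt_pseudoMonomial]
  split_ifs with h <;> simp [h]

lemma inVanishingIdeal_pseudoMonomial_iff (C : Finset (Finset (Fin n))) :
    InVanishingIdeal C (pseudoMonomial σ τ) ↔ ¬∃ c ∈ C, σ ⊆ c ∧ Disjoint τ c := by
  simp only [InVanishingIdeal, ← eval_evalPt_pseudoMonomial_ne_zero_iff, not_exists, not_and,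
    not_not]

/-- Divisibility of squarefree pseudomonomials is read off at the codewords `σ` and `τᶜ`,
where `x^σ(1-x)^τ` takes the value `1`. -/
lemma pseudoMonomial_dvd_iff (h : Disjoint σ τ) :
    pseudoMonomial σ' τ' ∣ pseudoMonomial σ τ ↔ σ' ⊆ σ ∧ τ' ⊆ τ := by
  constructor
  · intro hdvd
    have eval_ne_zero {c : Finset (Fin n)} (hc : σ ⊆ c ∧ Disjoint τ c) :
        σ' ⊆ c ∧ Disjoint τ' c := by
      rw [← eval_evalPt_pseudoMonomial_ne_zero_iff] at hc ⊢
      exact fun h0 => hc (zero_dvd_iff.mp (h0 ▸ map_dvd (eval (evalPt c)) hdvd))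
    exact ⟨(eval_ne_zero ⟨subset_rfl, h.symm⟩).1,
      disjoint_compl_right_iff.mp
        (eval_ne_zero ⟨le_compl_iff_disjoint_right.mpr h, disjoint_compl_right⟩).2⟩
  · rintro ⟨hσ, hτ⟩
    refine ⟨pseudoMonomial (σ \ σ') (τ \ τ'), ?_⟩
    simp only [pseudoMonomial, ← Finset.prod_sdiff hσ, ← Finset.prod_sdiff hτ]
    ring

lemma pseudoMonomial_inj (h : Disjoint σ τ) (h' : Disjoint σ' τ') :
    pseudoMonomial σ' τ' = pseudoMonomial σ τ ↔ σ' = σ ∧ τ' = τ := by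
  refine ⟨fun heq => ?_, fun ⟨rfl, rfl⟩ => rfl⟩
  obtain ⟨hσ, hτ⟩ := (pseudoMonomial_dvd_iff h).mp heq.dvd
  obtain ⟨hσ', hτ'⟩ := (pseudoMonomial_dvd_iff h').mp heq.symm.dvd
  exact ⟨hσ.antisymm hσ', hτ.antisymm hτ'⟩

end PseudoMonomial

section UnionCompletion

variable {n : ℕ} {C : Finset (Finset (Fin n))} {σ τ : Finset (Fin n)}

lemma mem_unionCompletion {c : Finset (Fin n)} :
    c ∈ unionCompletion C ↔ ∃ S ⊆ C, S.Nonempty ∧ S.sup id = c := by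
  simp [unionCompletion, Finset.nonempty_iff_ne_empty, and_assoc]

lemma subset_unionCompletion : C ⊆ unionCompletion C := fun c hc =>
  mem_unionCompletion.mpr
    ⟨{c}, Finset.singleton_subset_iff.mpr hc, Finset.singleton_nonempty c, Finset.sup_singleton⟩

/-- The union of all codewords of `C` avoiding `τ` is the largest codeword of `Č` avoiding `τ`. -/
lemma exists_mem_unionCompletion_iff :
    (∃ c ∈ unionCompletion C, σ ⊆ c ∧ Disjoint τ c) ↔
      (C.filter (Disjoint τ)).Nonempty ∧ σ ⊆ (C.filter (Disjoint τ)).sup id := by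
  constructor
  · rintro ⟨c, hc, hσ, hτ⟩
    obtain ⟨S, hSC, hS, rfl⟩ := mem_unionCompletion.mp hc
    have hSτ : S ⊆ C.filter (Disjoint τ) := fun s hs =>
      Finset.mem_filter.mpr ⟨hSC hs, hτ.mono_right (Finset.le_sup (f := id) hs)⟩
    exact ⟨hS.mono hSτ, hσ.trans (Finset.sup_mono hSτ)⟩
  · rintro ⟨hD, hσ⟩
    refine ⟨_, mem_unionCompletion.mpr ⟨_, Finset.filter_subset _ C, hD, rfl⟩, hσ, ?_⟩
    exact Finset.disjoint_sup_right.mpr fun s hs => (Finset.mem_filter.mp hs).2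

lemma exists_mem_unionCompletion_iff_of_card_le_one (hσ : σ.card ≤ 1) :
    (∃ c ∈ unionCompletion C, σ ⊆ c ∧ Disjoint τ c) ↔ ∃ c ∈ C, σ ⊆ c ∧ Disjoint τ c := by
  refine ⟨fun h => ?_, fun ⟨c, hc, hσc⟩ => ⟨c, subset_unionCompletion hc, hσc⟩⟩
  obtain ⟨⟨d, hd⟩, hσD⟩ := exists_mem_unionCompletion_iff.mp h
  rcases σ.eq_empty_or_nonempty with rfl | ⟨i, hi⟩
  · exact ⟨d, (Finset.mem_filter.mp hd).1, Finset.empty_subset d, (Finset.mem_filter.mp hd).2⟩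
  · obtain ⟨d, hd, hid⟩ := Finset.mem_sup.mp (hσD hi)
    have hσd : σ ⊆ d := fun j hj => Finset.card_le_one.mp hσ i hi j hj ▸ hid
    exact ⟨d, (Finset.mem_filter.mp hd).1, hσd, (Finset.mem_filter.mp hd).2⟩

lemma inVanishingIdeal_unionCompletion_iff (hσ : σ.card ≤ 1) :
    InVanishingIdeal (unionCompletion C) (pseudoMonomial σ τ) ↔
      InVanishingIdeal C (pseudoMonomial σ τ) := by
  simp only [inVanishingIdeal_pseudoMonomial_iff, exists_mem_unionCompletion_iff_of_card_le_one hσ]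

lemma InCanonicalForm.card_le_one_of_unionCompletion
    (h : InCanonicalForm (unionCompletion C) σ τ) : σ.card ≤ 1 := by
  obtain ⟨hdisj, hvan, hmin⟩ := h
  by_contra! hcard
  have h_single (i : Fin n) (hi : i ∈ σ) : ∃ c ∈ unionCompletion C, {i} ⊆ c ∧ Disjoint τ c := by
    by_contra hvi
    rw [← inVanishingIdeal_pseudoMonomial_iff] at hvi
    have hdisj_i : Disjoint {i} τ :=
      Finset.disjoint_singleton_left.mpr (Finset.disjoint_left.mp hdisj hi)
    have hdvd := (pseudoMonomial_dvd_iff hdisj).mpr ⟨Finset.singleton_subset_iff.mpr hi, subset_rfl⟩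
    obtain ⟨rfl, -⟩ := (pseudoMonomial_inj hdisj hdisj_i).mp (hmin _ _ hdisj_i hvi hdvd)
    simp at hcard
  simp_rw [exists_mem_unionCompletion_iff, Finset.singleton_subset_iff] at h_single
  rw [inVanishingIdeal_pseudoMonomial_iff, exists_mem_unionCompletion_iff] at hvan
  obtain ⟨i, hi⟩ := Finset.card_pos.mp (show 0 < σ.card by omega)
  exact hvan ⟨(h_single i hi).1, fun j hj => (h_single j hj).2⟩

end UnionCompletion

lemma InCanonicalForm.of_inVanishingIdeal_iff {n : ℕ} {C C' : Finset (Finset (Fin n))}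
    {σ τ : Finset (Fin n)}
    (hCC' : ∀ σ' ⊆ σ, ∀ τ', InVanishingIdeal C (pseudoMonomial σ' τ') ↔
      InVanishingIdeal C' (pseudoMonomial σ' τ'))
    (h : InCanonicalForm C σ τ) : InCanonicalForm C' σ τ := by
  obtain ⟨hdisj, hvan, hmin⟩ := h
  refine ⟨hdisj, (hCC' σ subset_rfl τ).mp hvan, fun σ' τ' hd' hv' hdvd => hmin σ' τ' hd' ?_ hdvd⟩
  exact (hCC' σ' ((pseudoMonomial_dvd_iff hdisj).mp hdvd).1 τ').mpr hv'

theorem canonicalForm_of_unionCompletion_general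
    (n : ℕ) (C : Finset (Finset (Fin n))) :
    ∀ σ τ : Finset (Fin n),
      (InCanonicalForm C σ τ ∧ σ.card ≤ 1) ↔ InCanonicalForm (unionCompletion C) σ τ := by
  intro σ τ
  have h_agree (hσ : σ.card ≤ 1) : ∀ σ' ⊆ σ, ∀ τ', InVanishingIdeal C (pseudoMonomial σ' τ') ↔
      InVanishingIdeal (unionCompletion C) (pseudoMonomial σ' τ') := fun σ' hσ' _ =>
    (inVanishingIdeal_unionCompletion_iff ((Finset.card_le_card hσ').trans hσ)).symm
  constructor
  · rintro ⟨h, hσ⟩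
    exact h.of_inVanishingIdeal_iff (h_agree hσ)
  · intro h
    have hσ := h.card_le_one_of_unionCompletion
    exact ⟨h.of_inVanishingIdeal_iff fun σ' hσ' τ' => (h_agree hσ σ' hσ' τ').symm, hσ⟩

/-- For a nonempty code `C`, the subset `Γ' = {x^σ(1-x)^τ ∈ CF(I_C) : |σ| ≤ 1}`
of the canonical form of `C` is exactly the canonical form of the vanishing
ideal of the union completion of `C`. -/
theorem canonicalForm_of_unionCompletion
    (n : ℕ) (C : Finset (Finset (Fin n))) (hC : C.Nonempty) :
    ∀ σ τ : Finset (Fin n),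
      (InCanonicalForm C σ τ ∧ σ.card ≤ 1) ↔ InCanonicalForm (unionCompletion C) σ τ :=
  canonicalForm_of_unionCompletion_general n C
end

section
/- Let C be a combinatorial code on n neurons and let i ∈ [n] be a neuron with tk_C({i}) ≠ ∅. Then i is redundant in C if and only if tk_C({i}) = tk_C(√[C]{i} ∖ {i}), where √[C]{i} is the root of {i} relative to C. -/
/-!
Intersecting all codewords that contain `σ` does not change which codewords contain it, so
`tk_C(√[C]σ) = tk_C(σ)`, and every set squeezed between `σ` and `√[C]σ` has the same trunk.
If `tk_C({i}) = tk_C(σ)` with `i ∉ σ`, then `√[C]{i} = √[C]σ`, and `√[C]{i} ∖ {i}` lies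
between `σ` and `√[C]σ`.
-/

/-- The trunk of `τ` in the code `C`: all codewords containing `τ`. -/
def trunk {n : ℕ} (C : Finset (Finset (Fin n))) (τ : Finset (Fin n)) :
    Finset (Finset (Fin n)) :=
  C.filter (fun σ => τ ⊆ σ)

/-- The root of a family of subsets of `[n]`: the intersection of all its members
(the full set `[n]` if the family is empty). -/
def root {n : ℕ} (S : Finset (Finset (Fin n))) : Finset (Fin n) :=
  S.inf id

/-- The root of `τ` relative to `C`: the intersection of all codewords
containing `τ`. -/
def rootRel {n : ℕ} (C : Finset (Finset (Fin n))) (τ : Finset (Fin n)) :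
    Finset (Fin n) :=
  root (trunk C τ)

section Trunk

variable {n : ℕ} {C : Finset (Finset (Fin n))} {σ ρ : Finset (Fin n)}

lemma mem_trunk : ρ ∈ trunk C σ ↔ ρ ∈ C ∧ σ ⊆ ρ := Finset.mem_filter

lemma trunk_anti (h : σ ⊆ ρ) : trunk C ρ ⊆ trunk C σ :=
  fun _ hτ => mem_trunk.mpr ⟨(mem_trunk.mp hτ).1, h.trans (mem_trunk.mp hτ).2⟩

lemma rootRel_subset_of_mem_trunk (h : ρ ∈ trunk C σ) : rootRel C σ ⊆ ρ :=
  Finset.inf_le (f := id) h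

lemma subset_rootRel : σ ⊆ rootRel C σ :=
  Finset.le_inf fun _ hρ => (mem_trunk.mp hρ).2

lemma trunk_rootRel : trunk C (rootRel C σ) = trunk C σ :=
  (trunk_anti subset_rootRel).antisymm fun _ hρ =>
    mem_trunk.mpr ⟨(mem_trunk.mp hρ).1, rootRel_subset_of_mem_trunk hρ⟩

lemma trunk_eq_of_subset_of_subset_rootRel (hσ : σ ⊆ ρ) (hρ : ρ ⊆ rootRel C σ) :
    trunk C ρ = trunk C σ :=
  (trunk_anti hσ).antisymm (trunk_rootRel (C := C) ▸ trunk_anti hρ)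

end Trunk

theorem redundant_iff_trunk_rootRel_erase_general (n : ℕ) (C : Finset (Finset (Fin n)))
    (i : Fin n) :
    (∃ σ : Finset (Fin n), i ∉ σ ∧ trunk C {i} = trunk C σ) ↔
      trunk C {i} = trunk C ((rootRel C {i}).erase i) := by
  constructor
  · rintro ⟨σ, hiσ, hσ⟩
    have hrootRel : rootRel C {i} = rootRel C σ := congrArg root hσ
    have hσ_sub : σ ⊆ (rootRel C {i}).erase i :=
      Finset.subset_erase.mpr ⟨hrootRel ▸ subset_rootRel, hiσ⟩
    rw [hσ, trunk_eq_of_subset_of_subset_rootRel hσ_sub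
      (hrootRel ▸ Finset.erase_subset i (rootRel C {i}))]
  · exact fun h => ⟨_, Finset.notMem_erase i _, h⟩

/-- Redundancy Lemma: a neuron `i` with nonempty trunk is redundant (i.e. redundant
to some `σ ⊆ [n] ∖ {i}`) if and only if `tk_C({i}) = tk_C(√[C]{i} ∖ {i})`. -/
theorem redundant_iff_trunk_rootRel_erase (n : ℕ) (C : Finset (Finset (Fin n)))
    (i : Fin n) (h : (trunk C {i}).Nonempty) :
    (∃ σ : Finset (Fin n), i ∉ σ ∧ trunk C {i} = trunk C σ) ↔
      trunk C {i} = trunk C ((rootRel C {i}).erase i) :=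
  redundant_iff_trunk_rootRel_erase_general n C i
end

section
/- Let C be a reduced combinatorial code on n neurons, let i ∈ [n], and let f_i be the i-th covering map f_i(c) = (c ∖ {i}) ∪ {n+j : j ∈ [n], {i,j} ⊆ c, tk_C({i,j}) ≠ tk_C({i})}. Then for any two distinct codewords σ, τ ∈ C, one has f_i(σ) = f_i(τ) if and only if {σ, τ} = {√[C]{i} ∖ {i}, √[C]{i}}. -/
/-- A code is reduced if it has no trivial neurons (empty trunks) and no
redundant neurons. -/
def Reduced {n : ℕ} (C : Finset (Finset (Fin n))) : Prop :=
  (∀ i : Fin n, (trunk C {i}).Nonempty) ∧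
    ∀ i : Fin n, ¬ ∃ σ : Finset (Fin n), i ∉ σ ∧ trunk C {i} = trunk C σ

/-- The `i`-th covering map `f_i : C → 2^[2n]`,
`f_i(c) = (c ∖ {i}) ∪ {n+j : {i,j} ⊆ c, tk_C({i,j}) ≠ tk_C({i})}`, where the
ground set `[2n]` is encoded as `Fin n ⊕ Fin n` (`inl` for the original neurons,
`inr j` for the new neuron `n + j`). -/
def coveringMap {n : ℕ} (C : Finset (Finset (Fin n))) (i : Fin n)
    (c : Finset (Fin n)) : Finset (Fin n ⊕ Fin n) :=
  (c.erase i).image Sum.inl ∪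
    ((Finset.univ.filter (fun j : Fin n =>
        ({i, j} : Finset (Fin n)) ⊆ c ∧ trunk C {i, j} ≠ trunk C {i})).image Sum.inr)

section

variable {n : ℕ} {C : Finset (Finset (Fin n))}

lemma mem_trunk_s12 {τ s : Finset (Fin n)} : s ∈ trunk C τ ↔ s ∈ C ∧ τ ⊆ s :=
  Finset.mem_filter

lemma mem_root {S : Finset (Finset (Fin n))} {x : Fin n} : x ∈ root S ↔ ∀ s ∈ S, x ∈ s := by
  simp [root, Finset.mem_inf]

lemma rootRel_subset {τ s : Finset (Fin n)} (hs : s ∈ C) (hτs : τ ⊆ s) : rootRel C τ ⊆ s :=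
  fun _ hx => mem_root.1 hx s (mem_trunk_s12.2 ⟨hs, hτs⟩)

lemma trunk_insert (j : Fin n) (τ : Finset (Fin n)) :
    trunk C (insert j τ) = (trunk C τ).filter (j ∈ ·) := by
  ext s
  simp only [mem_trunk_s12, Finset.mem_filter, Finset.insert_subset_iff]
  tauto

lemma trunk_insert_eq_iff {j : Fin n} {τ : Finset (Fin n)} :
    trunk C (insert j τ) = trunk C τ ↔ j ∈ rootRel C τ := by
  rw [trunk_insert, Finset.filter_eq_self, rootRel, mem_root]

def newNeurons (C : Finset (Finset (Fin n))) (i : Fin n) (c : Finset (Fin n)) : Finset (Fin n) :=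
  Finset.univ.filter fun j => ({i, j} : Finset (Fin n)) ⊆ c ∧ trunk C {i, j} ≠ trunk C {i}

lemma mem_newNeurons {i j : Fin n} {c : Finset (Fin n)} :
    j ∈ newNeurons C i c ↔ i ∈ c ∧ j ∈ c \ rootRel C {i} := by
  simp only [newNeurons, Finset.mem_filter, Finset.mem_univ, true_and, Finset.mem_sdiff,
    Finset.insert_subset_iff, Finset.singleton_subset_iff, Finset.pair_comm i j,
    trunk_insert_eq_iff.not]
  tauto

lemma coveringMap_eq_disjSum (i : Fin n) (c : Finset (Fin n)) :
    coveringMap C i c = (c.erase i).disjSum (newNeurons C i c) := by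
  ext (j | j) <;> simp [coveringMap, newNeurons]

lemma coveringMap_eq_iff {i : Fin n} {a b : Finset (Fin n)} :
    coveringMap C i a = coveringMap C i b ↔
      a.erase i = b.erase i ∧ newNeurons C i a = newNeurons C i b := by
  rw [coveringMap_eq_disjSum, coveringMap_eq_disjSum, Finset.disjSum_inj]

lemma coveringMap_rootRel_erase (i : Fin n) :
    coveringMap C i ((rootRel C {i}).erase i) = coveringMap C i (rootRel C {i}) := by
  refine coveringMap_eq_iff.2 ⟨Finset.erase_idem, ?_⟩
  ext j
  simp [mem_newNeurons]

lemma eq_rootRel_of_coveringMap_eq {i : Fin n} {a b : Finset (Fin n)} (ha : a ∈ C)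
    (hia : i ∈ a) (hib : i ∉ b) (h : coveringMap C i a = coveringMap C i b) :
    a = rootRel C {i} ∧ b = (rootRel C {i}).erase i := by
  obtain ⟨herase, hnew⟩ := coveringMap_eq_iff.1 h
  have ha_root : a = rootRel C {i} := by
    refine subset_antisymm (fun j hj => ?_)
      (rootRel_subset ha (Finset.singleton_subset_iff.2 hia))
    by_contra hj_root
    have hj_new : j ∈ newNeurons C i b :=
      hnew ▸ mem_newNeurons.2 ⟨hia, Finset.mem_sdiff.2 ⟨hj, hj_root⟩⟩
    exact hib (mem_newNeurons.1 hj_new).1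
  refine ⟨ha_root, ?_⟩
  rw [← ha_root, herase, Finset.erase_eq_of_notMem hib]

end

theorem coveringMap_strong_collision_general (n : ℕ) (C : Finset (Finset (Fin n)))
    (i : Fin n) (σ τ : Finset (Fin n))
    (hσ : σ ∈ C) (hτ : τ ∈ C) (hne : σ ≠ τ) :
    coveringMap C i σ = coveringMap C i τ ↔
      ({σ, τ} : Finset (Finset (Fin n))) =
        {(rootRel C {i}).erase i, rootRel C {i}} := by
  constructor
  · intro h
    have herase := (coveringMap_eq_iff.1 h).1
    by_cases hiσ : i ∈ σ <;> by_cases hiτ : i ∈ τ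
    · exact absurd (Finset.erase_injOn' i hiσ hiτ herase) hne
    · obtain ⟨rfl, rfl⟩ := eq_rootRel_of_coveringMap_eq hσ hiσ hiτ h
      exact Finset.pair_comm _ _
    · obtain ⟨rfl, rfl⟩ := eq_rootRel_of_coveringMap_eq hτ hiτ hiσ h.symm
      rfl
    · rw [Finset.erase_eq_of_notMem hiσ, Finset.erase_eq_of_notMem hiτ] at herase
      exact absurd herase hne
  · intro h
    rw [← Finset.coe_inj, Finset.coe_pair, Finset.coe_pair, Set.pair_eq_pair_iff] at h
    rcases h with ⟨rfl, rfl⟩ | ⟨rfl, rfl⟩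
    · exact coveringMap_rootRel_erase i
    · exact (coveringMap_rootRel_erase i).symm

/-- Strong collision lemma: for a reduced code `C`, two distinct codewords `σ, τ`
collide under the `i`-th covering map iff `{σ, τ} = {√[C]{i} ∖ {i}, √[C]{i}}`. -/
theorem coveringMap_strong_collision (n : ℕ) (C : Finset (Finset (Fin n)))
    (i : Fin n) (hC : Reduced C) (σ τ : Finset (Fin n))
    (hσ : σ ∈ C) (hτ : τ ∈ C) (hne : σ ≠ τ) :
    coveringMap C i σ = coveringMap C i τ ↔
      ({σ, τ} : Finset (Finset (Fin n))) =
        {(rootRel C {i}).erase i, rootRel C {i}} :=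
  coveringMap_strong_collision_general n C i σ τ hσ hτ hne
end

section
/- Let C be a combinatorial code on n neurons. The map c ↦ tk_C(c), from C to the set of nonempty trunks of C, is a bijection if and only if C is intersection-complete. (The map is always injective; it is surjective onto the nonempty trunks exactly when C is intersection-complete.) -/
/-- The set of nonempty trunks of `C`. -/
def nonemptyTrunks {n : ℕ} (C : Finset (Finset (Fin n))) :
    Finset (Finset (Finset (Fin n))) :=
  ((Finset.univ : Finset (Finset (Fin n))).image (fun τ => trunk C τ)).filter
    (fun T => T ≠ ∅)

lemma mem_trunk_iff {n : ℕ} {C : Finset (Finset (Fin n))} {τ σ : Finset (Fin n)} :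
    σ ∈ trunk C τ ↔ σ ∈ C ∧ τ ⊆ σ := by
  simp [trunk]

lemma inf'_mem {n : ℕ} {C : Finset (Finset (Fin n))} (hIC : IntersectionComplete C) :
    ∀ T : Finset (Finset (Fin n)), ∀ hT : T.Nonempty, T ⊆ C → T.inf' hT id ∈ C := by
  intro T
  induction T using Finset.induction_on with
  | empty => intro h; simp at h
  | @insert a T ha ih =>
    intro hT hsub
    rcases T.eq_empty_or_nonempty with rfl | hT'
    · simpa using hsub (Finset.mem_insert_self _ _)
    · rw [Finset.inf'_insert hT']
      exact hIC _ (hsub (Finset.mem_insert_self _ _)) _ (ih hT' (fun x hx => hsub (Finset.mem_insert_of_mem hx)))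

/-- The map `c ↦ tk_C(c)`, from the code `C` to the set of nonempty trunks of
`C`, is a bijection if and only if `C` is intersection-complete. -/
theorem trunk_bijOn_iff_intersectionComplete (n : ℕ)
    (C : Finset (Finset (Fin n))) :
    Set.BijOn (fun c => trunk C c) (↑C) (↑(nonemptyTrunks C)) ↔
      IntersectionComplete C := by
  have hmaps : Set.MapsTo (fun c => trunk C c) (↑C) (↑(nonemptyTrunks C)) := by
    intro c hc
    simp only [Finset.mem_coe, nonemptyTrunks, Finset.mem_filter, Finset.mem_image] at *
    refine ⟨⟨c, Finset.mem_univ _, rfl⟩, ?_⟩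
    intro h
    have : c ∈ trunk C c := mem_trunk_iff.mpr ⟨hc, le_refl _⟩
    simp [h] at this
  have hinj : Set.InjOn (fun c => trunk C c) (↑C) := by
    intro a ha b hb hab
    simp only [Finset.mem_coe] at ha hb
    simp only at hab
    have h1 : b ∈ trunk C a := by
      rw [hab]; exact mem_trunk_iff.mpr ⟨hb, le_refl _⟩
    have h2 : a ∈ trunk C b := by
      rw [← hab]; exact mem_trunk_iff.mpr ⟨ha, le_refl _⟩
    exact Finset.Subset.antisymm (mem_trunk_iff.mp h1).2 (mem_trunk_iff.mp h2).2
  constructor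
  · rintro ⟨-, -, hsurj⟩ σ hσ τ hτ
    have hTne : σ ∈ trunk C (σ ∩ τ) := mem_trunk_iff.mpr ⟨hσ, Finset.inter_subset_left⟩
    have hmem : trunk C (σ ∩ τ) ∈ nonemptyTrunks C := by
      simp only [nonemptyTrunks, Finset.mem_filter, Finset.mem_image]
      exact ⟨⟨σ ∩ τ, Finset.mem_univ _, rfl⟩, fun h => by simp [h] at hTne⟩
    obtain ⟨c, hc, hceq⟩ := hsurj hmem
    simp only at hceq
    have hc' : c ∈ C := hc
    have hcmem : c ∈ trunk C (σ ∩ τ) := by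
      rw [← hceq]; exact mem_trunk_iff.mpr ⟨hc', le_refl _⟩
    have hσmem : σ ∈ trunk C c := by rw [hceq]; exact hTne
    have hτmem : τ ∈ trunk C c := by
      rw [hceq]; exact mem_trunk_iff.mpr ⟨hτ, Finset.inter_subset_right⟩
    have : c = σ ∩ τ := by
      apply Finset.Subset.antisymm
      · exact Finset.subset_inter (mem_trunk_iff.mp hσmem).2 (mem_trunk_iff.mp hτmem).2
      · exact (mem_trunk_iff.mp hcmem).2
    rwa [← this]
  · intro hIC
    refine ⟨hmaps, hinj, ?_⟩
    intro T hT
    simp only [Finset.mem_coe, nonemptyTrunks, Finset.mem_filter, Finset.mem_image] at hT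
    obtain ⟨⟨τ, -, rfl⟩, hne⟩ := hT
    have hTne : (trunk C τ).Nonempty := Finset.nonempty_iff_ne_empty.mpr hne
    set c := (trunk C τ).inf' hTne id with hcdef
    have hsub : trunk C τ ⊆ C := Finset.filter_subset _ _
    have hcC : c ∈ C := inf'_mem hIC _ hTne hsub
    have hτc : τ ⊆ c := by
      show τ ≤ c
      apply Finset.le_inf'
      intro b hb
      exact (mem_trunk_iff.mp hb).2
    refine ⟨c, hcC, ?_⟩
    simp only
    apply Finset.Subset.antisymm
    · intro σ hσ
      have := (mem_trunk_iff.mp hσ).2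
      exact mem_trunk_iff.mpr ⟨(mem_trunk_iff.mp hσ).1, hτc.trans this⟩
    · intro σ hσ
      refine mem_trunk_iff.mpr ⟨(mem_trunk_iff.mp hσ).1, ?_⟩
      exact (Finset.inf'_le id hσ : c ≤ σ)
end

section
/- Let C be a reduced combinatorial code on n neurons that is intersection-complete, and let m = |C|. Then the Boolean rank of C equals min(m, n): there exist sets η_1,…,η_r ⊆ [n] with r = min(m,n) such that every codeword of C is a union of a subfamily of {η_1,…,η_r}, and no such family with r < min(m,n) sets exists. -/
/-!
For a neuron `i`, let `A i` be the intersection of all codewords containing `i`. Intersection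
completeness makes `A i` a codeword, and every codeword `c` is the union of the `A i` with
`i ∈ c`, so `n` sets suffice. Reducedness makes `i ↦ A i` injective, whence `n ≤ |C|`.
Conversely, if the codewords are unions of `η 1, …, η r`, then `A i` contains some `η j ∋ i`;
if the same `η j` served `i'` as well, `A i` and `A i'` would each contain the other's neuron,
hence each other. So `i ↦ j` is injective and `n ≤ r`.
-/

open Function

theorem Fintype.card_le_of_forall_eq_sup {α κ : Type*} [Fintype α] [Fintype κ] [DecidableEq α]
    {A : α → Finset α} (hA : Injective A) (hmem : ∀ a, a ∈ A a)
    (hsub : ∀ a b, a ∈ A b → A a ⊆ A b) {η : κ → Finset α}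
    (hη : ∀ a, ∃ s : Finset κ, A a = s.sup η) :
    Fintype.card α ≤ Fintype.card κ := by
  have generator : ∀ a, ∃ k, a ∈ η k ∧ η k ⊆ A a := by
    intro a
    obtain ⟨s, hs⟩ := hη a
    obtain ⟨k, hk, hak⟩ := Finset.mem_sup.1 (hs ▸ hmem a)
    exact ⟨k, hak, hs ▸ Finset.le_sup hk⟩
  choose f mem_η η_subset using generator
  refine Fintype.card_le_of_injective f fun a b hab => hA ?_
  exact (hsub a b (η_subset b (hab ▸ mem_η a))).antisymm (hsub b a (η_subset a (hab ▸ mem_η b)))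

section MinCodeword

variable {n : ℕ} {C : Finset (Finset (Fin n))}

theorem mem_trunk_singleton {i : Fin n} {σ : Finset (Fin n)} :
    σ ∈ trunk C {i} ↔ σ ∈ C ∧ i ∈ σ := by
  simp [trunk]

-- `univ` when no codeword contains `i`.
variable (C) in
def minCodeword (i : Fin n) : Finset (Fin n) :=
  (trunk C {i}).inf id

theorem mem_minCodeword (i : Fin n) : i ∈ minCodeword C i :=
  Finset.singleton_subset_iff.1 <| Finset.le_inf fun _ hσ =>
    Finset.singleton_subset_iff.2 (mem_trunk_singleton.1 hσ).2

theorem minCodeword_subset {i : Fin n} {σ : Finset (Fin n)} (hσ : σ ∈ C) (hi : i ∈ σ) :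
    minCodeword C i ⊆ σ :=
  Finset.inf_le (f := id) (mem_trunk_singleton.2 ⟨hσ, hi⟩)

theorem minCodeword_subset_iff {i : Fin n} {σ : Finset (Fin n)} (hσ : σ ∈ C) :
    minCodeword C i ⊆ σ ↔ i ∈ σ :=
  ⟨fun h => h (mem_minCodeword i), minCodeword_subset hσ⟩

theorem sup_minCodeword {σ : Finset (Fin n)} (hσ : σ ∈ C) : σ.sup (minCodeword C) = σ :=
  (Finset.sup_le fun _ hi => minCodeword_subset hσ hi).antisymm fun i hi =>
    Finset.mem_sup.2 ⟨i, hi, mem_minCodeword i⟩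

theorem trunk_singleton_eq_of_minCodeword_eq {i j : Fin n}
    (h : minCodeword C i = minCodeword C j) : trunk C {i} = trunk C {j} := by
  ext σ
  simp only [mem_trunk_singleton, and_congr_right_iff]
  intro hσ
  rw [← minCodeword_subset_iff hσ, h, minCodeword_subset_iff hσ]

theorem IntersectionComplete.minCodeword_mem (hic : IntersectionComplete C) {i : Fin n}
    (hi : (trunk C {i}).Nonempty) : minCodeword C i ∈ C := by
  rw [minCodeword, ← Finset.inf'_eq_inf hi]
  exact Finset.inf'_mem (C : Set (Finset (Fin n))) hic _ hi _ fun _ hσ =>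
    (mem_trunk_singleton.1 hσ).1

theorem Reduced.minCodeword_injective (hred : Reduced C) : Injective (minCodeword C) := by
  intro i j h
  by_contra hij
  exact hred.2 i ⟨{j}, Finset.notMem_singleton.2 hij, trunk_singleton_eq_of_minCodeword_eq h⟩

theorem Reduced.le_card (hred : Reduced C) (hic : IntersectionComplete C) : n ≤ C.card := by
  simpa using Finset.card_le_card_of_injOn (s := Finset.univ) (minCodeword C)
    (fun i _ => hic.minCodeword_mem (hred.1 i)) hred.minCodeword_injective.injOn

end MinCodeword

/-- An intersection-complete reduced code `C` with `m` codewords on `n` neurons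
has Boolean rank exactly `min m n`: the least `r` for which there are sets
`η 1, …, η r ⊆ [n]` such that every codeword of `C` is a union of a (possibly
empty) subfamily of them is `min m n`. -/
theorem brank_of_intersectionComplete (n : ℕ) (C : Finset (Finset (Fin n)))
    (hred : Reduced C) (hic : IntersectionComplete C) :
    IsLeast {r : ℕ | ∃ η : Fin r → Finset (Fin n),
        ∀ c ∈ C, ∃ ξ : Finset (Fin r), c = ξ.sup η}
      (min C.card n) := by
  rw [min_eq_right (hred.le_card hic)]
  refine ⟨⟨minCodeword C, fun c hc => ⟨c, (sup_minCodeword hc).symm⟩⟩, ?_⟩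
  rintro r ⟨η, hη⟩
  simpa using Fintype.card_le_of_forall_eq_sup hred.minCodeword_injective mem_minCodeword
    (fun i j hi => minCodeword_subset (hic.minCodeword_mem (hred.1 j)) hi)
    (fun i => hη _ (hic.minCodeword_mem (hred.1 i)))
end
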